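/- In the linear model of an η-adapted almost-complex structure (see context), with g(v, w) := a(v)λ(Jw) − a(Jw)λ(v) + ω(v, Jw) and with π_ξ : E → ξ the projection onto ξ along span{∂a, X}, one has for every v ∈ E the identity ω(v, Jv) = g(π_ξ v, π_ξ v). In particular, ω(v, Jv) ≥ 0 for every v ∈ E, with equality if and only if v ∈ span{∂a, X}. (This is the pointwise content of the lemma that the pullback of ω under a J-holomorphic map is pointwise non-negative on tangent planes, vanishing exactly on planes spanned by ∂a and the Hamiltonian vector field.) -/
import Mathlib


/-- In the linear model of an `η`-adapted almost-complex structure, with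
`g(v, w) := a(v)·λ(Jw) − a(Jw)·λ(v) + ω(v, Jw)` and `π_ξ` the projection onto
`ξ = ker a ∩ ker λ` along `span{∂a, X}`, one has `ω(v, Jv) = g(π_ξ v, π_ξ v)` for every
`v`; in particular `ω(v, Jv) ≥ 0`, with equality if and only if `v ∈ span{∂a, X}`. -/
theorem omega_nonneg_on_J_invariant_planes
    {E : Type*} [AddCommGroup E] [Module ℝ E] [FiniteDimensional ℝ E]
    (J : E →ₗ[ℝ] E) (hJJ : ∀ v, J (J v) = -v)
    (pa X : E) (hJpa : J pa = X)
    (a lam : E →ₗ[ℝ] ℝ)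
    (ha_pa : a pa = 1) (hlam_X : lam X = 1) (ha_X : a X = 0) (hlam_pa : lam pa = 0)
    (ω : LinearMap.BilinForm ℝ E) (hω_alt : ∀ v, ω v v = 0)
    (hω_pa : ∀ v, ω pa v = 0) (hω_X : ∀ v, ω X v = 0)
    (hsplit : IsCompl (Submodule.span ℝ {pa, X}) (LinearMap.ker a ⊓ LinearMap.ker lam))
    (hJξ : Submodule.map J (LinearMap.ker a ⊓ LinearMap.ker lam)
      = LinearMap.ker a ⊓ LinearMap.ker lam)
    (hω_J : ∀ v ∈ LinearMap.ker a ⊓ LinearMap.ker lam,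
      ∀ w ∈ LinearMap.ker a ⊓ LinearMap.ker lam, ω (J v) (J w) = ω v w)
    (hω_pos : ∀ v ∈ LinearMap.ker a ⊓ LinearMap.ker lam, v ≠ 0 → 0 < ω v (J v))
    (g : E → E → ℝ)
    (hg : ∀ v w, g v w = a v * lam (J w) - a (J w) * lam v + ω v (J w))
    (π : E →ₗ[ℝ] E)
    (hπ_mem : ∀ v, π v ∈ LinearMap.ker a ⊓ LinearMap.ker lam)
    (hπ_id : ∀ v ∈ LinearMap.ker a ⊓ LinearMap.ker lam, π v = v)
    (hπ_span : ∀ v, v - π v ∈ Submodule.span ℝ {pa, X}) :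
    ∀ v : E, ω v (J v) = g (π v) (π v) ∧
      0 ≤ ω v (J v) ∧
      (ω v (J v) = 0 ↔ v ∈ Submodule.span ℝ {pa, X}) := by
  -- skew-symmetry from alternating
  have skew : ∀ x y : E, ω x y = -ω y x := by
    intro x y
    have h := hω_alt (x + y)
    simp only [map_add, LinearMap.add_apply, hω_alt] at h
    linarith
  -- ω vanishes on span {pa, X} in the first slot
  have hspan0 : ∀ s ∈ Submodule.span ℝ ({pa, X} : Set E), ∀ w, ω s w = 0 := by
    intro s hs
    induction hs using Submodule.span_induction with
    | mem x hx =>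
      rcases hx with rfl | rfl
      · exact hω_pa
      · exact hω_X
    | zero => simp
    | add x y _ _ hx hy => intro w; simp [hx w, hy w]
    | smul c x _ hx => intro w; simp [hx w]
  -- J preserves span {pa, X}
  have hJspan : ∀ s ∈ Submodule.span ℝ ({pa, X} : Set E),
      J s ∈ Submodule.span ℝ ({pa, X} : Set E) := by
    intro s hs
    induction hs using Submodule.span_induction with
    | mem x hx =>
      rcases hx with rfl | rfl
      · rw [hJpa]
        exact Submodule.subset_span (by simp)
      · rw [← hJpa, hJJ]
        exact neg_mem (Submodule.subset_span (by simp))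
    | zero => simp
    | add x y _ _ hx hy => rw [map_add]; exact add_mem hx hy
    | smul c x _ hx => rw [map_smul]; exact Submodule.smul_mem _ _ hx
  intro v
  set u := π v with hu
  have hs : v - u ∈ Submodule.span ℝ ({pa, X} : Set E) := hπ_span v
  have hJs : J (v - u) ∈ Submodule.span ℝ ({pa, X} : Set E) := hJspan _ hs
  have humem := hπ_mem v
  obtain ⟨hau, hlu⟩ : a u = 0 ∧ lam u = 0 := by
    have h := humem
    rw [Submodule.mem_inf, LinearMap.mem_ker, LinearMap.mem_ker] at h
    exact h
  have key : ω v (J v) = ω u (J u) := by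
    have hv : v = (v - u) + u := by abel
    calc ω v (J v) = ω ((v - u) + u) (J ((v - u) + u)) := by rw [← hv]
      _ = ω (v - u) (J (v - u)) + ω (v - u) (J u) + (ω u (J (v - u)) + ω u (J u)) := by
          rw [map_add, map_add]; simp [LinearMap.add_apply]; ring
      _ = ω u (J u) := by
          rw [hspan0 _ hs, hspan0 _ hs, skew u (J (v - u)), hspan0 _ hJs]; ring
  have keyg : ω v (J v) = g u u := by
    rw [hg, hau, hlu, key]; ring
  have hzero_iff : ω v (J v) = 0 ↔ v ∈ Submodule.span ℝ ({pa, X} : Set E) := by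
    constructor
    · intro h0
      have hu0 : u = 0 := by
        by_contra hne
        have := hω_pos u humem hne
        rw [key] at h0
        linarith
      have : v = v - u := by rw [hu0]; abel
      rw [this]; exact hs
    · intro hv
      have hu_span : u ∈ Submodule.span ℝ ({pa, X} : Set E) := by
        have : u = v - (v - u) := by abel
        rw [this]
        exact sub_mem hv hs
      have hu0 : u = 0 := by
        have hd := hsplit.disjoint
        exact (Submodule.disjoint_def.mp hd) u hu_span humem
      rw [key, hu0]; simp
  refine ⟨keyg, ?_, hzero_iff⟩
  rcases eq_or_ne u 0 with h0 | hne
  · rw [key, h0]; simp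
  · have := hω_pos u humem hne
    rw [key]; linarith
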